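/- arXiv:2112.05810 — 3 statements merged into one kernel-verified Lean document; each statement's English description precedes it below -/
import Mathlib

section
/- Let H : ℝ² → ℝ be twice differentiable on the open positive quadrant with Hessian satisfying D²H(u,v) ≥ (1/2)·diag(F''(u), G''(v)) for positive functions F'', G'' on (0,∞). Let Γ(ρ,η) := DH((F')⁻¹(ρ), (G')⁻¹(η)) where F', G' are C¹ increasing bijections of (0,∞) with derivatives F'', G''. Then the Jacobian of Γ satisfies det DΓ(ρ,η) ≥ 1/4 for all ρ, η > 0. -/
lemma psd_det_nonneg {n : ℕ} {M : Matrix (Fin n) (Fin n) ℝ} (h : M.PosSemidef) :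
    0 ≤ M.det := by
  rw [h.isHermitian.det_eq_prod_eigenvalues]
  exact Finset.prod_nonneg fun i _ => h.eigenvalues_nonneg i

/-- If the Hessian of `H` satisfies `D²H(u,v) ≥ (1/2)·diag(F''(u), G''(v))` on the
positive quadrant (with `F'', G'' > 0` there), and `(F')⁻¹, (G')⁻¹` map `(0,∞)` into
`(0,∞)`, then the Jacobian matrix
`DΓ(ρ,η) = D²H(u,v)·diag(1/F''(u), 1/G''(v))` (with `u = (F')⁻¹(ρ)`, `v = (G')⁻¹(η)`)
has determinant at least `1/4`. -/
theorem jacobian_det_lower_bound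
    (F'' G'' : ℝ → ℝ)
    (hF'' : ∀ r : ℝ, 0 < r → 0 < F'' r) (hG'' : ∀ r : ℝ, 0 < r → 0 < G'' r)
    (Finv Ginv : ℝ → ℝ)
    (hFinv : ∀ ρ : ℝ, 0 < ρ → 0 < Finv ρ) (hGinv : ∀ η : ℝ, 0 < η → 0 < Ginv η)
    (Hess : ℝ → ℝ → Matrix (Fin 2) (Fin 2) ℝ)
    (hSym : ∀ u v : ℝ, 0 < u → 0 < v → (Hess u v).IsHermitian)
    (hHess : ∀ u v : ℝ, 0 < u → 0 < v →
      (Hess u v - (1 / 2 : ℝ) • Matrix.diagonal ![F'' u, G'' v]).PosSemidef) :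
    ∀ ρ η : ℝ, 0 < ρ → 0 < η →
      (1 / 4 : ℝ) ≤
        (Hess (Finv ρ) (Ginv η) *
          Matrix.diagonal ![(F'' (Finv ρ))⁻¹, (G'' (Ginv η))⁻¹]).det := by
  intro ρ η hρ hη
  have hu := hFinv ρ hρ
  have hv := hGinv η hη
  set u := Finv ρ
  set v := Ginv η
  have ha := hF'' u hu
  have hb := hG'' v hv
  set a := F'' u
  set b := G'' v
  set M := Hess u v with hM
  have hpsd := hHess u v hu hv
  have hq : M 1 0 = M 0 1 := by
    have := (hSym u v hu hv).apply 1 0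
    simpa using this.symm
  -- diagonal entries bounds
  have h00 : 0 ≤ M 0 0 - a / 2 := by
    have := hpsd.dotProduct_mulVec_nonneg ![1, 0]
    simp [Matrix.mulVec, dotProduct, Fin.sum_univ_two, Matrix.sub_apply,
      Matrix.smul_apply, Matrix.diagonal_apply] at this
    linarith
  have h11 : 0 ≤ M 1 1 - b / 2 := by
    have := hpsd.dotProduct_mulVec_nonneg ![0, 1]
    simp [Matrix.mulVec, dotProduct, Fin.sum_univ_two, Matrix.sub_apply,
      Matrix.smul_apply, Matrix.diagonal_apply] at this
    linarith
  have hdet : 0 ≤ (M 0 0 - a / 2) * (M 1 1 - b / 2) - (M 0 1) ^ 2 := by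
    have := psd_det_nonneg hpsd
    rw [Matrix.det_fin_two] at this
    simp only [Matrix.sub_apply, Matrix.smul_apply, Matrix.diagonal_apply,
      smul_eq_mul] at this
    simp only [Matrix.cons_val_zero, Matrix.cons_val_one, Matrix.head_cons] at this
    norm_num at this
    rw [show Hess u v 1 0 = Hess u v 0 1 from hq] at this
    nlinarith [this]
  rw [Matrix.det_mul, Matrix.det_fin_two, Matrix.det_diagonal, Fin.prod_univ_two]
  simp only [Matrix.cons_val_zero, Matrix.cons_val_one, Matrix.head_cons]
  rw [hq]
  have hab : 0 < a * b := mul_pos ha hb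
  rw [show (M 0 0 * M 1 1 - M 0 1 * M 0 1) * (a⁻¹ * b⁻¹)
      = (M 0 0 * M 1 1 - M 0 1 * M 0 1) / (a * b) by field_simp,
    le_div_iff₀ hab]
  nlinarith [h00, h11, hdet, ha, hb, mul_nonneg h00 h11]
end

section
/- Let F(u) = u^m/m and G(v) = v^n/n with m, n ≥ 2, and h(u,v) = u^p v^q e^{−λ(u+v)} with λ > 0, p ≥ m, q ≥ n. Then there exists ε* > 0 such that the function (u,v) ↦ F(u) + G(v) + 2ε*·h(u,v) is convex on the closed positive quadrant [0,∞)². -/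
/-!
Write the coupling as `c S(u) T(v)` with `S(u) = u^p e^{-λu}` and `T(v) = v^q e^{-λv}`. Since
`u^s e^{-λu}` is bounded on `[0, ∞)` for every `s ≥ 0`, the functions `S`, `S'`, `S''` are bounded
by multiples of `1`, `u^{(m-2)/2}`, `u^{m-2}`: the same orders as `√F''` and `F'' = (m-1) u^{m-2}`.
So the Hessian of the coupling is at most `2 c K L ((d₁ u^{(m-2)/2})² + (d₂ v^{(n-2)/2})²)`, which
the diagonal Hessian of `F + G` absorbs once `2 c K L ≤ 1`; convexity on the quadrant then follows
from the second-derivative test along each segment.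
-/

open Real Set Filter Asymptotics

theorem convexOn_of_convexOn_segment {E : Type*} [AddCommGroup E] [Module ℝ E] {s : Set E}
    {f : E → ℝ} (hs : Convex ℝ s)
    (h : ∀ x ∈ s, ∀ y ∈ s, ConvexOn ℝ (Icc 0 1) fun t : ℝ => f (x + t • (y - x))) :
    ConvexOn ℝ s f := by
  refine ⟨hs, fun x hx y hy a b ha hb hab => ?_⟩
  have hseg := (h x hx y hy).2 (left_mem_Icc.2 zero_le_one) (right_mem_Icc.2 zero_le_one)
    ha hb hab
  have hpt : x + b • (y - x) = a • x + b • y := by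
    rw [eq_sub_of_add_eq hab]
    module
  simpa [hpt] using hseg

theorem hasDerivAt_comp_add_mul {f f' : ℝ → ℝ} (hf : ∀ u, HasDerivAt f (f' u) u) (x d t : ℝ) :
    HasDerivAt (fun t => f (x + t * d)) (f' (x + t * d) * d) t := by
  have hline : HasDerivAt (fun t => x + t * d) d t := by
    simpa using ((hasDerivAt_id t).mul_const d).const_add x
  exact (hf (x + t * d)).comp t hline

theorem convexOn_add_add_mul_of_hessian_nonneg {s : Set (ℝ × ℝ)} (hs : Convex ℝ s)
    {F F' F'' G G' G'' S S' S'' T T' T'' : ℝ → ℝ}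
    (hF : ∀ u, HasDerivAt F (F' u) u) (hF' : ∀ u, HasDerivAt F' (F'' u) u)
    (hG : ∀ v, HasDerivAt G (G' v) v) (hG' : ∀ v, HasDerivAt G' (G'' v) v)
    (hS : ∀ u, HasDerivAt S (S' u) u) (hS' : ∀ u, HasDerivAt S' (S'' u) u)
    (hT : ∀ v, HasDerivAt T (T' v) v) (hT' : ∀ v, HasDerivAt T' (T'' v) v)
    (hess : ∀ w ∈ s, ∀ d₁ d₂ : ℝ, 0 ≤ d₁ ^ 2 * (F'' w.1 + S'' w.1 * T w.2) +
      2 * d₁ * d₂ * (S' w.1 * T' w.2) + d₂ ^ 2 * (G'' w.2 + S w.1 * T'' w.2)) :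
    ConvexOn ℝ s fun w => F w.1 + G w.2 + S w.1 * T w.2 := by
  refine convexOn_of_convexOn_segment hs fun x hx y hy => ?_
  set d := y - x
  have hF₁ := hasDerivAt_comp_add_mul hF x.1 d.1
  have hF₂ := hasDerivAt_comp_add_mul hF' x.1 d.1
  have hG₁ := hasDerivAt_comp_add_mul hG x.2 d.2
  have hG₂ := hasDerivAt_comp_add_mul hG' x.2 d.2
  have hS₁ := hasDerivAt_comp_add_mul hS x.1 d.1
  have hS₂ := hasDerivAt_comp_add_mul hS' x.1 d.1
  have hT₁ := hasDerivAt_comp_add_mul hT x.2 d.2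
  have hT₂ := hasDerivAt_comp_add_mul hT' x.2 d.2
  have hφ : ∀ t : ℝ, HasDerivAt (fun t => F (x.1 + t * d.1) + G (x.2 + t * d.2) +
      S (x.1 + t * d.1) * T (x.2 + t * d.2)) _ t := fun t =>
    ((hF₁ t).add (hG₁ t)).add ((hS₁ t).mul (hT₁ t))
  have hφ' : ∀ t : ℝ, HasDerivAt (fun t => F' (x.1 + t * d.1) * d.1 + G' (x.2 + t * d.2) * d.2 +
      (S' (x.1 + t * d.1) * d.1 * T (x.2 + t * d.2) +
        S (x.1 + t * d.1) * (T' (x.2 + t * d.2) * d.2))) _ t := fun t =>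
    (((hF₂ t).mul_const d.1).add ((hG₂ t).mul_const d.2)).add
      ((((hS₂ t).mul_const d.1).mul (hT₁ t)).add ((hS₁ t).mul ((hT₂ t).mul_const d.2)))
  simp only [Prod.fst_add, Prod.snd_add, Prod.smul_fst, Prod.smul_snd, smul_eq_mul]
  refine convexOn_of_hasDerivWithinAt2_nonneg (convex_Icc 0 1)
    (fun t _ => (hφ t).continuousAt.continuousWithinAt) (fun t _ => (hφ t).hasDerivWithinAt)
    (fun t _ => (hφ' t).hasDerivWithinAt) fun t ht => ?_
  have hmem : x + t • d ∈ s := by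
    rw [interior_Icc] at ht
    simpa [d, add_sub_cancel] using hs.add_smul_sub_mem hx hy (Ioo_subset_Icc_self ht)
  convert hess _ hmem d.1 d.2 using 1
  simp only [Prod.fst_add, Prod.snd_add, Prod.smul_fst, Prod.smul_snd, smul_eq_mul]
  ring

theorem rpow_mul_exp_neg_le {s lam u : ℝ} (hs : 0 ≤ s) (hlam : 0 < lam) (hu : 0 ≤ u) :
    u ^ s * exp (-lam * u) ≤ (s / lam) ^ s := by
  rcases hs.eq_or_lt with rfl | hs
  · simpa using exp_le_one_iff.2 (by nlinarith : -lam * u ≤ 0)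
  have hlin : u ≤ s / lam * exp (lam * u / s) := by
    have := add_one_le_exp (lam * u / s)
    calc u = s / lam * (lam * u / s) := by field_simp
      _ ≤ s / lam * exp (lam * u / s) := by gcongr; linarith
  calc u ^ s * exp (-lam * u)
      ≤ (s / lam * exp (lam * u / s)) ^ s * exp (-lam * u) := by gcongr
    _ = (s / lam) ^ s := by
      rw [mul_rpow (by positivity) (exp_pos _).le, ← exp_mul, mul_assoc, ← exp_add]
      field_simp
      simp

noncomputable def powExp (lam r u : ℝ) : ℝ := u ^ r * exp (-lam * u)

noncomputable def powExpDeriv (lam r u : ℝ) : ℝ := r * powExp lam (r - 1) u - lam * powExp lam r u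

theorem hasDerivAt_powExp {lam r : ℝ} (hr : 1 ≤ r) (u : ℝ) :
    HasDerivAt (powExp lam r) (powExpDeriv lam r u) u := by
  have hexp : HasDerivAt (fun u => exp (-lam * u)) (exp (-lam * u) * -lam) u :=
    ((hasDerivAt_id u).const_mul (-lam)).exp.congr_deriv (by simp)
  exact ((hasDerivAt_rpow_const (Or.inr hr)).mul hexp).congr_deriv
    (by simp only [powExpDeriv, powExp]; ring)

theorem hasDerivAt_powExpDeriv {lam r : ℝ} (hr : 2 ≤ r) (u : ℝ) :
    HasDerivAt (powExpDeriv lam r)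
      (r * powExpDeriv lam (r - 1) u - lam * powExpDeriv lam r u) u :=
  ((hasDerivAt_powExp (by linarith) u).const_mul r).sub
    ((hasDerivAt_powExp (by linarith) u).const_mul lam)

theorem isBigO_powExp {lam a g : ℝ} (hlam : 0 < lam) (hg : 0 ≤ g) (hga : g ≤ a) :
    powExp lam a =O[𝓟 (Ici 0)] fun u => u ^ g := by
  refine isBigO_principal.2 ⟨((a - g) / lam) ^ (a - g), fun u (hu : 0 ≤ u) => ?_⟩
  have hsplit : u ^ a = u ^ g * u ^ (a - g) := by
    rw [← rpow_add_of_nonneg hu hg (by linarith), add_sub_cancel]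
  rw [norm_of_nonneg (by unfold powExp; positivity), norm_of_nonneg (by positivity),
    powExp, hsplit, mul_assoc, mul_comm _ (u ^ g)]
  gcongr
  exact rpow_mul_exp_neg_le (by linarith) hlam hu

theorem isBigO_powExpDeriv {lam r g : ℝ} (hlam : 0 < lam) (hg : 0 ≤ g) (hgr : g ≤ r - 1) :
    powExpDeriv lam r =O[𝓟 (Ici 0)] fun u => u ^ g :=
  ((isBigO_powExp hlam hg hgr).const_mul_left r).sub
    ((isBigO_powExp hlam hg (by linarith)).const_mul_left lam)

theorem exists_bound_of_isBigO_rpow {f : ℝ → ℝ} {g : ℝ} (h : f =O[𝓟 (Ici 0)] fun u => u ^ g) :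
    ∃ K, 0 < K ∧ ∀ u, 0 ≤ u → |f u| ≤ K * u ^ g := by
  obtain ⟨K, hK, hf⟩ := h.exists_pos
  refine ⟨K, hK, fun u hu => ?_⟩
  simpa [norm_of_nonneg (rpow_nonneg hu g)] using eventually_principal.1 hf.bound u hu

theorem sq_rpow_div_two {u : ℝ} (hu : 0 ≤ u) (g : ℝ) : (u ^ (g / 2)) ^ 2 = u ^ g := by
  rw [← rpow_natCast, ← rpow_mul hu]
  norm_num

theorem exists_powExp_bounds {lam m r : ℝ} (hlam : 0 < lam) (hm : 2 ≤ m) (hmr : m ≤ r) :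
    ∃ K, 0 < K ∧ ∀ u, 0 ≤ u →
      |powExp lam r u| ≤ K ∧ |powExpDeriv lam r u| ≤ K * u ^ ((m - 2) / 2) ∧
        |r * powExpDeriv lam (r - 1) u - lam * powExpDeriv lam r u| ≤
          K * (u ^ ((m - 2) / 2)) ^ 2 := by
  have h₀ : powExp lam r =O[𝓟 (Ici 0)] fun u => u ^ (0 : ℝ) :=
    isBigO_powExp hlam le_rfl (by linarith)
  have h₁ : powExpDeriv lam r =O[𝓟 (Ici 0)] fun u => u ^ ((m - 2) / 2) :=
    isBigO_powExpDeriv hlam (by linarith) (by linarith)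
  have h₂ : (fun u => r * powExpDeriv lam (r - 1) u - lam * powExpDeriv lam r u)
      =O[𝓟 (Ici 0)] fun u => u ^ (m - 2) :=
    ((isBigO_powExpDeriv hlam (by linarith) (by linarith)).const_mul_left r).sub
      ((isBigO_powExpDeriv hlam (by linarith) (by linarith)).const_mul_left lam)
  obtain ⟨K₀, hK₀, h₀⟩ := exists_bound_of_isBigO_rpow h₀
  obtain ⟨K₁, hK₁, h₁⟩ := exists_bound_of_isBigO_rpow h₁
  obtain ⟨K₂, hK₂, h₂⟩ := exists_bound_of_isBigO_rpow h₂
  refine ⟨K₀ + K₁ + K₂, by positivity, fun u hu => ⟨?_, ?_, ?_⟩⟩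
  · have := h₀ u hu
    rw [rpow_zero] at this
    linarith
  · exact (h₁ u hu).trans (mul_le_mul_of_nonneg_right (by linarith) (by positivity))
  · rw [sq_rpow_div_two hu]
    exact (h₂ u hu).trans (mul_le_mul_of_nonneg_right (by linarith) (by positivity))

theorem abs_coupling_le {S₀ S₁ S₂ T₀ T₁ T₂ a b K L d₁ d₂ : ℝ}
    (hS₀ : |S₀| ≤ K) (hS₁ : |S₁| ≤ K * a) (hS₂ : |S₂| ≤ K * a ^ 2)
    (hT₀ : |T₀| ≤ L) (hT₁ : |T₁| ≤ L * b) (hT₂ : |T₂| ≤ L * b ^ 2) :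
    |d₁ ^ 2 * S₂ * T₀ + 2 * d₁ * d₂ * S₁ * T₁ + d₂ ^ 2 * S₀ * T₂| ≤
      2 * K * L * ((d₁ * a) ^ 2 + (d₂ * b) ^ 2) := by
  have hK : 0 ≤ K := (abs_nonneg _).trans hS₀
  have hL : 0 ≤ L := (abs_nonneg _).trans hT₀
  have hKa : 0 ≤ K * a := (abs_nonneg _).trans hS₁
  calc _ ≤ |d₁ ^ 2 * S₂ * T₀| + |2 * d₁ * d₂ * S₁ * T₁| + |d₂ ^ 2 * S₀ * T₂| :=
        abs_add_three _ _ _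
    _ = d₁ ^ 2 * |S₂| * |T₀| + 2 * |d₁| * |d₂| * |S₁| * |T₁| + d₂ ^ 2 * |S₀| * |T₂| := by
      simp only [abs_mul, abs_pow, sq_abs, abs_two]
    _ ≤ d₁ ^ 2 * (K * a ^ 2) * L + 2 * |d₁| * |d₂| * (K * a) * (L * b) +
        d₂ ^ 2 * K * (L * b ^ 2) := by gcongr
    _ ≤ 2 * K * L * ((d₁ * a) ^ 2 + (d₂ * b) ^ 2) := by
      rw [mul_pow, mul_pow, ← sq_abs d₁, ← sq_abs d₂]
      linear_combination mul_nonneg (mul_nonneg hK hL) (sq_nonneg (|d₁| * a - |d₂| * b))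

theorem coupled_hessian_nonneg {α β c S₀ S₁ S₂ T₀ T₁ T₂ a b K L d₁ d₂ : ℝ}
    (hα : 1 ≤ α) (hβ : 1 ≤ β) (hc : 0 ≤ c) (hcKL : 2 * c * K * L ≤ 1)
    (hS₀ : |S₀| ≤ K) (hS₁ : |S₁| ≤ K * a) (hS₂ : |S₂| ≤ K * a ^ 2)
    (hT₀ : |T₀| ≤ L) (hT₁ : |T₁| ≤ L * b) (hT₂ : |T₂| ≤ L * b ^ 2) :
    0 ≤ d₁ ^ 2 * (α * a ^ 2 + c * S₂ * T₀) + 2 * d₁ * d₂ * (c * S₁ * T₁) +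
      d₂ ^ 2 * (β * b ^ 2 + c * S₀ * T₂) := by
  have hW := mul_le_mul_of_nonneg_left
    (abs_le.1 (abs_coupling_le (d₁ := d₁) (d₂ := d₂) hS₀ hS₁ hS₂ hT₀ hT₁ hT₂)).1 hc
  linear_combination hW + mul_nonneg (sub_nonneg.2 hα) (sq_nonneg (d₁ * a)) +
    mul_nonneg (sub_nonneg.2 hβ) (sq_nonneg (d₂ * b)) +
    mul_nonneg (sub_nonneg.2 hcKL) (add_nonneg (sq_nonneg (d₁ * a)) (sq_nonneg (d₂ * b)))

theorem hasDerivAt_rpow_div_self {m : ℝ} (hm : 1 ≤ m) (u : ℝ) :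
    HasDerivAt (fun u => u ^ m / m) (u ^ (m - 1)) u :=
  ((hasDerivAt_rpow_const (Or.inr hm)).div_const m).congr_deriv
    (by field_simp [(by linarith : m ≠ 0)])

theorem hasDerivAt_rpow_sub_one {m : ℝ} (hm : 2 ≤ m) (u : ℝ) :
    HasDerivAt (fun u => u ^ (m - 1)) ((m - 1) * u ^ (m - 2)) u := by
  convert hasDerivAt_rpow_const (x := u) (Or.inr (by linarith : 1 ≤ m - 1)) using 3
  ring

theorem mul_mul_exp_neg_add_eq (lam p q u v : ℝ) :
    u ^ p * v ^ q * exp (-lam * (u + v)) = powExp lam p u * powExp lam q v := by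
  rw [powExp, powExp, mul_add, exp_add]
  ring

/-- For `F(u) = u^m/m`, `G(v) = v^n/n` with `m, n ≥ 2` and
`h(u,v) = u^p v^q e^{−λ(u+v)}` with `λ > 0`, `p ≥ m`, `q ≥ n`, there exists `ε* > 0`
such that `(u,v) ↦ F(u) + G(v) + 2ε* h(u,v)` is convex on `[0,∞)²`. -/
theorem exists_eps_convex_coupling
    (m n p q lam : ℝ) (hm : 2 ≤ m) (hn : 2 ≤ n)
    (hp : m ≤ p) (hq : n ≤ q) (hlam : 0 < lam) :
    ∃ εs : ℝ, 0 < εs ∧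
      ConvexOn ℝ (Set.Ici (0 : ℝ) ×ˢ Set.Ici (0 : ℝ))
        (fun w : ℝ × ℝ =>
          w.1 ^ m / m + w.2 ^ n / n +
            2 * εs * (w.1 ^ p * w.2 ^ q * Real.exp (-lam * (w.1 + w.2)))) := by
  obtain ⟨K, hK, hSp⟩ := exists_powExp_bounds hlam hm hp
  obtain ⟨L, hL, hSq⟩ := exists_powExp_bounds hlam hn hq
  refine ⟨1 / (4 * K * L), by positivity, ?_⟩
  simp only [mul_mul_exp_neg_add_eq, ← mul_assoc]
  set c := 2 * (1 / (4 * K * L))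
  have hcKL : 2 * c * K * L ≤ 1 := by simp only [c]; field_simp; norm_num
  refine convexOn_add_add_mul_of_hessian_nonneg ((convex_Ici 0).prod (convex_Ici 0))
    (hasDerivAt_rpow_div_self (by linarith)) (hasDerivAt_rpow_sub_one hm)
    (hasDerivAt_rpow_div_self (by linarith)) (hasDerivAt_rpow_sub_one hn)
    (fun u => (hasDerivAt_powExp (by linarith) u).const_mul c)
    (fun u => (hasDerivAt_powExpDeriv (by linarith) u).const_mul c)
    (hasDerivAt_powExp (by linarith)) (hasDerivAt_powExpDeriv (by linarith)) ?_
  rintro ⟨u, v⟩ ⟨hu, hv⟩ d₁ d₂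
  obtain ⟨hS₀, hS₁, hS₂⟩ := hSp u hu
  obtain ⟨hT₀, hT₁, hT₂⟩ := hSq v hv
  dsimp only
  rw [← sq_rpow_div_two hu (m - 2), ← sq_rpow_div_two hv (n - 2)]
  exact coupled_hessian_nonneg (α := m - 1) (β := n - 1) (by linarith) (by linarith)
    (by positivity) hcKL hS₀ hS₁ hS₂ hT₀ hT₁ hT₂
end

section
/- Let F : [0,∞) → ℝ be C¹ with F(0) = F'(0) = 0, F convex, and suppose there exist constants c₀ > 0, C₀ and an exponent m ≥ 2 with F''(r) ≥ c₀ r^{m−2} and F'(r) ≤ C₀ r^{m−1} for all r in (0, Ū]. Then for 0 ≤ u < ū ≤ Ū the Bregman divergence d_F(u|ū) = ∫_u^{ū}(r−u)F''(r)dr satisfies d_F(u|ū) ≥ (3c₀/2^{m+1})·ū^{m−2}·(u − ū)². -/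
/-!
Split `[u, ū]` at `a = max u (ū/2)`. On `[ū/2, ū]` the lower bound on `F''` makes `F` strongly
convex with modulus `c = c₀ (ū/2)^{m-2}`, while on `[u, a]` the function `F` is at least convex.
The three-point identity
`d_F(u|ū) = d_F(u|a) + d_F(a|ū) + (a - u)(F'(ū) - F'(a))`
then gives `d_F(u|ū) ≥ c ((ū - a)²/2 + (a - u)(ū - a)) ≥ (3/8) c (ū - u)²`.
-/

open Set

def bregman (F F' : ℝ → ℝ) (x y : ℝ) : ℝ := F x - F y - (x - y) * F' y

theorem bregman_three_point (F F' : ℝ → ℝ) (x y z : ℝ) :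
    bregman F F' x z = bregman F F' x y + bregman F F' y z + (y - x) * (F' z - F' y) := by
  unfold bregman
  ring

theorem monotoneOn_sub_mul_of_hasDerivWithinAt {f f' : ℝ → ℝ} {D : Set ℝ} {c : ℝ}
    (hD : Convex ℝ D) (hf : ∀ x ∈ D, HasDerivWithinAt f (f' x) D x)
    (hc : ∀ x ∈ interior D, c ≤ f' x) : MonotoneOn (fun x => f x - c * x) D := by
  refine monotoneOn_of_hasDerivWithinAt_nonneg (f' := fun x => f' x - c) hD
    (fun x hx => ((hf x hx).continuousWithinAt).sub (continuousWithinAt_const.mul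
      continuousWithinAt_id)) (fun x hx => ?_) (fun x hx => sub_nonneg.2 (hc x hx))
  have hfx := (hf x (interior_subset hx)).mono interior_subset
  simpa using hfx.fun_sub ((hasDerivWithinAt_id x (interior D)).const_mul c)

theorem mul_sq_div_two_le_bregman {F F' : ℝ → ℝ} {c x y : ℝ} (hxy : x ≤ y)
    (hF : ∀ r ∈ Icc x y, HasDerivWithinAt F (F' r) (Icc x y) r)
    (hF' : MonotoneOn (fun r => F' r - c * r) (Ioc x y)) :
    c * (y - x) ^ 2 / 2 ≤ bregman F F' x y := by
  unfold bregman
  rcases hxy.eq_or_lt with rfl | hxy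
  · simp
  have hG : AntitoneOn (fun r => F r - r * F' y - c * (y - r) ^ 2 / 2) (Icc x y) := by
    refine antitoneOn_of_hasDerivWithinAt_nonpos (f' := fun r => F' r - F' y + c * (y - r))
      (convex_Icc x y) (fun r hr => ?_) (fun r hr => ?_) (fun r hr => ?_)
    · exact ((hF r hr).continuousWithinAt.sub (continuousWithinAt_id.mul
        continuousWithinAt_const)).sub (by fun_prop)
    · have hFr := (hF r (interior_subset hr)).mono interior_subset
      have hq := (((hasDerivAt_id' r).const_sub y).fun_pow 2).const_mul c |>.div_const 2
      refine ((hFr.fun_sub ((hasDerivAt_id' r).mul_const (F' y)).hasDerivWithinAt).fun_sub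
        hq.hasDerivWithinAt).congr_deriv ?_
      norm_num
      ring
    · rw [interior_Icc] at hr
      have := hF' ⟨hr.1, hr.2.le⟩ ⟨hxy, le_rfl⟩ hr.2.le
      simp only at this
      linarith
  have := hG ⟨le_rfl, hxy.le⟩ ⟨hxy.le, le_rfl⟩ hxy.le
  simp only [sub_self] at this
  linarith

theorem rpow_sub_two_div_two_rpow_add_one {x : ℝ} (hx : 0 ≤ x) (m : ℝ) :
    x ^ (m - 2) / 2 ^ (m + 1) = (x / 2) ^ (m - 2) / 8 := by
  have h8 : (2 : ℝ) ^ (3 : ℝ) = 8 := by norm_num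
  rw [show m + 1 = (m - 2) + 3 by ring, Real.rpow_add two_pos, h8,
    Real.div_rpow hx zero_le_two, div_div]

theorem three_div_eight_mul_sq_le_of_max_half {u ub : ℝ} (hu : 0 ≤ u) (hlt : u < ub) :
    3 / 8 * (u - ub) ^ 2 ≤
      (ub - max u (ub / 2)) ^ 2 / 2 + (max u (ub / 2) - u) * (ub - max u (ub / 2)) := by
  have hlo : (ub - u) / 2 ≤ ub - max u (ub / 2) := by
    have : max u (ub / 2) ≤ (ub + u) / 2 := max_le (by linarith) (by linarith)
    linarith
  have hhi : ub - max u (ub / 2) ≤ ub - u := by linarith [le_max_left u (ub / 2)]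
  nlinarith [mul_nonneg (sub_nonneg.2 hlo) (sub_nonneg.2 hhi)]

section PowerLaw

variable {F F' F'' : ℝ → ℝ} {c₀ Ub m : ℝ}

theorem monotoneOn_sub_mul_rpow_of_le {s : ℝ} {D : Set ℝ}
    (hc₀ : 0 ≤ c₀) (hm : 2 ≤ m) (hs : 0 ≤ s) (hD : Convex ℝ D) (hDsub : D ⊆ Ioc 0 Ub)
    (hsD : ∀ r ∈ D, s ≤ r)
    (hF' : ∀ r ∈ Ioc 0 Ub, HasDerivWithinAt F' (F'' r) (Icc 0 Ub) r)
    (hlow : ∀ r ∈ Ioc 0 Ub, c₀ * r ^ (m - 2) ≤ F'' r) :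
    MonotoneOn (fun r => F' r - c₀ * s ^ (m - 2) * r) D := by
  refine monotoneOn_sub_mul_of_hasDerivWithinAt hD
    (fun r hr => (hF' r (hDsub hr)).mono (hDsub.trans Ioc_subset_Icc_self)) fun r hr => ?_
  have hrD := interior_subset hr
  exact (mul_le_mul_of_nonneg_left (Real.rpow_le_rpow hs (hsD r hrD) (by linarith)) hc₀).trans
    (hlow r (hDsub hrD))

theorem mul_rpow_mul_sq_div_two_le_bregman {s x y : ℝ}
    (hc₀ : 0 ≤ c₀) (hm : 2 ≤ m) (hs : 0 ≤ s) (hsx : s ≤ x) (hxy : x ≤ y)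
    (hy : y ≤ Ub) (hF : ∀ r ∈ Icc 0 Ub, HasDerivWithinAt F (F' r) (Icc 0 Ub) r)
    (hF' : ∀ r ∈ Ioc 0 Ub, HasDerivWithinAt F' (F'' r) (Icc 0 Ub) r)
    (hlow : ∀ r ∈ Ioc 0 Ub, c₀ * r ^ (m - 2) ≤ F'' r) :
    c₀ * s ^ (m - 2) * (y - x) ^ 2 / 2 ≤ bregman F F' x y := by
  have hx : 0 ≤ x := hs.trans hsx
  refine mul_sq_div_two_le_bregman hxy
    (fun r hr => (hF r ⟨hx.trans hr.1, hr.2.trans hy⟩).mono (Icc_subset_Icc hx hy))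
    (monotoneOn_sub_mul_rpow_of_le hc₀ hm hs (convex_Ioc x y) ?_ ?_ hF' hlow)
  · exact Ioc_subset_Ioc_right hy |>.trans (Ioc_subset_Ioc_left hx)
  · exact fun r hr => hsx.trans hr.1.le

theorem mul_rpow_mul_sub_le_sub {s x y : ℝ}
    (hc₀ : 0 ≤ c₀) (hm : 2 ≤ m) (hs : 0 < s) (hsx : s ≤ x) (hxy : x ≤ y) (hy : y ≤ Ub)
    (hF' : ∀ r ∈ Ioc 0 Ub, HasDerivWithinAt F' (F'' r) (Icc 0 Ub) r)
    (hlow : ∀ r ∈ Ioc 0 Ub, c₀ * r ^ (m - 2) ≤ F'' r) :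
    c₀ * s ^ (m - 2) * (y - x) ≤ F' y - F' x := by
  have hmono := monotoneOn_sub_mul_rpow_of_le hc₀ hm hs.le (convex_Icc x y)
    (fun r hr => ⟨hs.trans_le (hsx.trans hr.1), hr.2.trans hy⟩) (fun r hr => hsx.trans hr.1)
    hF' hlow
  have := hmono ⟨le_rfl, hxy⟩ ⟨hxy, le_rfl⟩ hxy
  simp only at this
  linarith

end PowerLaw

theorem bregman_power_lower_bound_general
    (F F' F'' : ℝ → ℝ) (c₀ Ub m : ℝ)
    (hc₀ : 0 < c₀) (hm : 2 ≤ m)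
    (hF : ∀ r ∈ Set.Icc (0 : ℝ) Ub, HasDerivWithinAt F (F' r) (Set.Icc 0 Ub) r)
    (hF' : ∀ r ∈ Set.Ioc (0 : ℝ) Ub, HasDerivWithinAt F' (F'' r) (Set.Icc 0 Ub) r)
    (hlow : ∀ r ∈ Set.Ioc (0 : ℝ) Ub, c₀ * r ^ (m - 2) ≤ F'' r) :
    ∀ u ub : ℝ, 0 ≤ u → u < ub → ub ≤ Ub →
      3 * c₀ / 2 ^ (m + 1) * ub ^ (m - 2) * (u - ub) ^ 2 ≤
        F u - F ub - (u - ub) * F' ub := by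
  intro u ub hu hlt hub
  set a := max u (ub / 2)
  set c := c₀ * (ub / 2) ^ (m - 2)
  have hub0 : 0 < ub := hu.trans_lt hlt
  have hua : u ≤ a := le_max_left _ _
  have hahalf : ub / 2 ≤ a := le_max_right _ _
  have haub : a < ub := max_lt hlt (by linarith)
  have hc : 0 ≤ c := by positivity
  have h₁ : 0 ≤ bregman F F' u a :=
    (by positivity : 0 ≤ c₀ * u ^ (m - 2) * (a - u) ^ 2 / 2).trans
    (mul_rpow_mul_sq_div_two_le_bregman hc₀.le hm hu le_rfl hua (haub.le.trans hub) hF hF' hlow)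
  have h₂ : c * (ub - a) ^ 2 / 2 ≤ bregman F F' a ub :=
    mul_rpow_mul_sq_div_two_le_bregman hc₀.le hm (by positivity) hahalf haub.le hub hF hF' hlow
  have h₃ : c * (ub - a) ≤ F' ub - F' a :=
    mul_rpow_mul_sub_le_sub hc₀.le hm (by positivity) hahalf haub.le hub hF' hlow
  have hconst : 3 * c₀ / 2 ^ (m + 1) * ub ^ (m - 2) = 3 / 8 * c := by
    rw [mul_comm_div, rpow_sub_two_div_two_rpow_add_one hub0.le]
    ring
  calc 3 * c₀ / 2 ^ (m + 1) * ub ^ (m - 2) * (u - ub) ^ 2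
      ≤ c * ((ub - a) ^ 2 / 2 + (a - u) * (ub - a)) := by
        rw [hconst, mul_assoc, mul_left_comm]
        exact mul_le_mul_of_nonneg_left (three_div_eight_mul_sq_le_of_max_half hu hlt) hc
    _ ≤ bregman F F' u a + bregman F F' a ub + (a - u) * (F' ub - F' a) := by
        nlinarith [mul_le_mul_of_nonneg_left h₃ (sub_nonneg.2 hua)]
    _ = bregman F F' u ub := (bregman_three_point F F' u a ub).symm

/-- If `F` is C¹ on `[0,Ū]` with `F(0) = F'(0) = 0`, convex, and satisfies the power-law
bounds `F''(r) ≥ c₀ r^{m−2}` and `F'(r) ≤ C₀ r^{m−1}` on `(0, Ū]` for some `m ≥ 2`, then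
for `0 ≤ u < ū ≤ Ū` the Bregman divergence satisfies
`d_F(u|ū) ≥ (3c₀/2^{m+1})·ū^{m−2}·(u − ū)²`. -/
theorem bregman_power_lower_bound
    (F F' F'' : ℝ → ℝ) (c₀ C₀ Ub m : ℝ)
    (hc₀ : 0 < c₀) (hUb : 0 < Ub) (hm : 2 ≤ m)
    (hF0 : F 0 = 0) (hF'0 : F' 0 = 0)
    (hF : ∀ r ∈ Set.Icc (0 : ℝ) Ub, HasDerivWithinAt F (F' r) (Set.Icc 0 Ub) r)
    (hF' : ∀ r ∈ Set.Ioc (0 : ℝ) Ub, HasDerivWithinAt F' (F'' r) (Set.Icc 0 Ub) r)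
    (hlow : ∀ r ∈ Set.Ioc (0 : ℝ) Ub, c₀ * r ^ (m - 2) ≤ F'' r)
    (hupp : ∀ r ∈ Set.Ioc (0 : ℝ) Ub, F' r ≤ C₀ * r ^ (m - 1)) :
    ∀ u ub : ℝ, 0 ≤ u → u < ub → ub ≤ Ub →
      3 * c₀ / 2 ^ (m + 1) * ub ^ (m - 2) * (u - ub) ^ 2 ≤
        F u - F ub - (u - ub) * F' ub :=
  bregman_power_lower_bound_general F F' F'' c₀ Ub m hc₀ hm hF hF' hlow
end
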